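/- Applying a local rotation R_y(α) to the input |0⟩ before creating entanglement subjected to amplitude damping can increase the singlet fraction: for the state (cos(α/2)|0⟩+sin(α/2)|1⟩) entangled via CNOT-style correlation and then subject to amplitude damping with parameter p on one arm, the overlap with φ⁺ is maximized at a non-trivial angle α ≠ 0 whenever 0 < p < 1; i.e., there exists α with fidelity strictly greater than the fidelity at α = 0. -/
import Mathlib


open Matrix
open scoped Kronecker

/-- The projector onto the two-qubit maximally entangled state `(|00⟩+|11⟩)/√2`. -/
noncomputable def phiPlus : Matrix (Fin 2 × Fin 2) (Fin 2 × Fin 2) ℂ :=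
  Matrix.of fun p q => if p.1 = p.2 ∧ q.1 = q.2 then (1/2 : ℂ) else 0

/-- Kraus operator `K₀ = |0⟩⟨0| + √(1−p)|1⟩⟨1|` of the amplitude damping channel. -/
noncomputable def adK0 (p : ℝ) : Matrix (Fin 2) (Fin 2) ℂ :=
  !![1, 0; 0, (Real.sqrt (1 - p) : ℂ)]

/-- Kraus operator `K₁ = √p|0⟩⟨1|` of the amplitude damping channel. -/
noncomputable def adK1 (p : ℝ) : Matrix (Fin 2) (Fin 2) ℂ :=
  !![0, (Real.sqrt p : ℂ); 0, 0]

/-- Amplitude damping on the first qubit of a two-qubit state. -/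
noncomputable def adFirst (p : ℝ) (ρ : Matrix (Fin 2 × Fin 2) (Fin 2 × Fin 2) ℂ) :
    Matrix (Fin 2 × Fin 2) (Fin 2 × Fin 2) ℂ :=
  (adK0 p ⊗ₖ (1 : Matrix (Fin 2) (Fin 2) ℂ)) * ρ * (adK0 p ⊗ₖ (1 : Matrix (Fin 2) (Fin 2) ℂ))ᴴ +
  (adK1 p ⊗ₖ (1 : Matrix (Fin 2) (Fin 2) ℂ)) * ρ * (adK1 p ⊗ₖ (1 : Matrix (Fin 2) (Fin 2) ℂ))ᴴ

/-- The pure state `|ψ(θ)⟩ = cos θ|00⟩ + sin θ|11⟩` obtained by pre-processing. -/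
noncomputable def psiTheta (θ : ℝ) : Fin 2 × Fin 2 → ℂ :=
  fun p => if p = (0, 0) then (Real.cos θ : ℂ) else if p = (1, 1) then (Real.sin θ : ℂ) else 0

/-- The projector `|ψ(θ)⟩⟨ψ(θ)|`. -/
noncomputable def psiProj (θ : ℝ) : Matrix (Fin 2 × Fin 2) (Fin 2 × Fin 2) ℂ :=
  Matrix.of fun p q => psiTheta θ p * (starRingEnd ℂ) (psiTheta θ q)

/-- The singlet fraction `F(θ,p) = ⟨φ⁺|(AD_p ⊗ id)(|ψ(θ)⟩⟨ψ(θ)|)|φ⁺⟩`. -/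
noncomputable def singletFrac (θ p : ℝ) : ℝ :=
  ((adFirst p (psiProj θ) * phiPlus).trace).re


lemma frac_eq (θ p : ℝ) :
    singletFrac θ p = (Real.cos θ + Real.sqrt (1-p) * Real.sin θ)^2 / 2 := by
  simp only [singletFrac, adFirst, phiPlus, psiProj, psiTheta, adK0, adK1, Matrix.trace,
    Matrix.diag, Matrix.mul_apply, Matrix.add_apply, Matrix.conjTranspose_apply,
    Matrix.kroneckerMap_apply, Matrix.one_apply, Fintype.sum_prod_type, Fin.sum_univ_two,
    Matrix.of_apply, Matrix.cons_val', Matrix.cons_val_zero, Matrix.cons_val_one,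
    Matrix.head_cons, Matrix.head_fin_const, Matrix.empty_val', Matrix.cons_val_fin_one]
  norm_num [Complex.ext_iff]
  ring_nf
  simp only [Complex.cos_ofReal_re, Complex.sin_ofReal_re]
  ring

/-- **Pre-processing helps.**  For amplitude damping with `0 < p < 1` on one arm of the
state `cos θ|00⟩ + sin θ|11⟩`, the derivative of the singlet fraction `F(θ,p)` with respect
to `θ` is nonzero at `θ = π/4` (the no-pre-processing maximally entangled input), so there
exists an angle `θ` with strictly larger fidelity than at `θ = π/4`. -/
theorem stmt_14 (p : ℝ) (hp0 : 0 < p) (hp1 : p < 1) :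
    deriv (fun θ : ℝ => singletFrac θ p) (Real.pi / 4) ≠ 0 ∧
    ∃ θ : ℝ, singletFrac θ p > singletFrac (Real.pi / 4) p := by
  set q := Real.sqrt (1 - p) with hq
  have hq0 : 0 ≤ q := Real.sqrt_nonneg _
  have hq2 : q ^ 2 = 1 - p := Real.sq_sqrt (by linarith)
  have hq1 : q < 1 := by nlinarith
  have hfun : (fun θ : ℝ => singletFrac θ p)
      = fun θ : ℝ => (Real.cos θ + q * Real.sin θ) ^ 2 / 2 :=
    funext fun θ => frac_eq θ p
  constructor
  · have hd : HasDerivAt (fun θ : ℝ => (Real.cos θ + q * Real.sin θ) ^ 2 / 2)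
        ((2 * (Real.cos (Real.pi/4) + q * Real.sin (Real.pi/4)) ^ 1 *
          (-Real.sin (Real.pi/4) + q * Real.cos (Real.pi/4))) / 2) (Real.pi/4) := by
      exact (((Real.hasDerivAt_cos _).add ((Real.hasDerivAt_sin _).const_mul q)).pow 2).div_const 2
    rw [hfun, hd.deriv]
    rw [Real.cos_pi_div_four, Real.sin_pi_div_four]
    have h2 : Real.sqrt 2 ^ 2 = 2 := Real.sq_sqrt (by norm_num)
    have h2p : (0:ℝ) < Real.sqrt 2 := by positivity
    intro h
    nlinarith [sq_nonneg (1+q), sq_nonneg (1-q)]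
  · refine ⟨Real.arctan q, ?_⟩
    rw [frac_eq, frac_eq, Real.cos_arctan, Real.sin_arctan,
      Real.cos_pi_div_four, Real.sin_pi_div_four]
    have hs0 : (0:ℝ) < Real.sqrt (1 + q ^ 2) := by positivity
    have hs2 : Real.sqrt (1 + q ^ 2) ^ 2 = 1 + q ^ 2 := Real.sq_sqrt (by positivity)
    have h2 : Real.sqrt 2 ^ 2 = 2 := Real.sq_sqrt (by norm_num)
    rw [gt_iff_lt, div_lt_div_iff₀ (by norm_num) (by norm_num)]
    have key : (1 / Real.sqrt (1 + q ^ 2) + q * (q / Real.sqrt (1 + q ^ 2))) ^ 2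
        = 1 + q ^ 2 := by
      field_simp
      nlinarith
    rw [key]
    nlinarith [sq_nonneg (1 - q)]
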